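/- Let g : ℝ → ℝ be bounded and measurable, let x ∈ ℝ, let t < s₁ < s₂ < T be real numbers, let r_i, r_j, r_k, α_i, α_j, α_k ∈ ℝ and σ_i, σ_j, σ_k > 0. Define r̄ = (r_i(s₁−t) + r_j(s₂−s₁) + r_k(T−s₂))/(T−t), ᾱ = (α_i(s₁−t) + α_j(s₂−s₁) + α_k(T−s₂))/(T−t), and σ̄ = √((σ_i²(s₁−t) + σ_j²(s₂−s₁) + σ_k²(T−s₂))/(T−t)). Then ∫_ℝ ∫_ℝ e^{−r_i(s₁−t) − r_j(s₂−s₁)}·V(x·exp((r_i−α_i−σ_i²/2)(s₁−t) + σ_i√(s₁−t)·z₁ + (r_j−α_j−σ_j²/2)(s₂−s₁) + σ_j√(s₂−s₁)·z₂), r_k, σ_k, T−s₂, α_k) dγ(z₁) dγ(z₂) = V(x, r̄, σ̄, T−t, ᾱ). -/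

import Mathlib

/-!
Over the three segments the log-price picks up the drifts `(r - α - σ²/2)Δ` and the independent
centred Gaussian increments `σ √Δ Z`. Drifts and discounts add up, and a sum of independent
centred Gaussians is centred Gaussian with the summed variance `σᵢ²Δᵢ + σⱼ²Δⱼ + σₖ²Δₖ`
(`gaussianReal_conv_gaussianReal`). So both sides are the same integral against
`N(0, σᵢ²Δᵢ + σⱼ²Δⱼ + σₖ²Δₖ)`, and dividing the sums by `T - t` gives the averaged parameters.
-/

open MeasureTheory ProbabilityTheory

/-- The standard Gaussian measure `N(0,1)` on `ℝ`. -/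
noncomputable def stdGaussian : Measure ℝ := gaussianReal 0 1

/-- `V g x r σ t α = ∫ e^{-rt} g(x e^{(r-α-σ²/2)t + σ√t z}) dγ(z)`. -/
noncomputable def V (g : ℝ → ℝ) (x r σ t α : ℝ) : ℝ :=
  ∫ z, Real.exp (-(r * t)) *
      g (x * Real.exp ((r - α - σ ^ 2 / 2) * t + σ * Real.sqrt t * z)) ∂stdGaussian

open scoped NNReal

namespace ProbabilityTheory

variable {E : Type*} [NormedAddCommGroup E] [NormedSpace ℝ E]

lemma integral_gaussianReal_comp_const_mul {μ : ℝ} {v : ℝ≥0} {f : ℝ → E} (c : ℝ)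
    (hf : AEStronglyMeasurable f (gaussianReal (c * μ) (.mk (c ^ 2) (sq_nonneg c) * v))) :
    ∫ z, f (c * z) ∂gaussianReal μ v
      = ∫ u, f u ∂gaussianReal (c * μ) (.mk (c ^ 2) (sq_nonneg c) * v) := by
  rw [← gaussianReal_map_const_mul] at hf ⊢
  exact (integral_map (by fun_prop) hf).symm

lemma gaussianReal_prod_map_add_const_mul {m₁ m₂ : ℝ} {v₁ v₂ : ℝ≥0} (c : ℝ) :
    ((gaussianReal m₁ v₁).prod (gaussianReal m₂ v₂)).map (fun p ↦ p.1 + c * p.2)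
      = gaussianReal (m₁ + c * m₂) (v₁ + .mk (c ^ 2) (sq_nonneg c) * v₂) := by
  rw [← gaussianReal_conv_gaussianReal, ← gaussianReal_map_const_mul, Measure.conv,
    ← Measure.map_id (μ := gaussianReal m₁ v₁),
    Measure.map_prod_map _ _ measurable_id (by fun_prop),
    Measure.map_map (by fun_prop) (by fun_prop), Measure.map_id]
  rfl

lemma integral_integral_gaussianReal_add_const_mul {m₁ m₂ : ℝ} {v₁ v₂ : ℝ≥0} {f : ℝ → E}
    (c : ℝ) (hf : Integrable f (gaussianReal (m₁ + c * m₂) (v₁ + .mk (c ^ 2) (sq_nonneg c) * v₂))) :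
    ∫ y, ∫ x, f (x + c * y) ∂gaussianReal m₁ v₁ ∂gaussianReal m₂ v₂
      = ∫ z, f z ∂gaussianReal (m₁ + c * m₂) (v₁ + .mk (c ^ 2) (sq_nonneg c) * v₂) := by
  rw [← gaussianReal_prod_map_add_const_mul] at hf ⊢
  rw [integral_map (by fun_prop) hf.1, integral_prod_symm]
  exact (integrable_map_measure hf.1 (by fun_prop)).mp hf

lemma integral_integral_integral_gaussianReal {F : ℝ → E} (hF : StronglyMeasurable F)
    (hF_bdd : ∃ C, ∀ u, ‖F u‖ ≤ C) (v : ℝ≥0) (a b : ℝ) :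
    ∫ z₂, ∫ z₁, ∫ w, F (w + a * z₁ + b * z₂) ∂gaussianReal 0 v ∂gaussianReal 0 1
        ∂gaussianReal 0 1
      = ∫ u, F u ∂gaussianReal 0 (v + .mk (a ^ 2) (sq_nonneg a) + .mk (b ^ 2) (sq_nonneg b)) := by
  obtain ⟨C, hC⟩ := hF_bdd
  have hF_shift (c : ℝ) (μ : Measure ℝ) [IsFiniteMeasure μ] :
      Integrable (fun u ↦ F (u + c)) μ :=
    .of_bound (hF.comp_measurable (measurable_add_const c)).aestronglyMeasurable C
      (.of_forall fun u ↦ hC _)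
  have h_inner (z₂ : ℝ) :
      ∫ z₁, ∫ w, F (w + a * z₁ + b * z₂) ∂gaussianReal 0 v ∂gaussianReal 0 1
        = ∫ u, F (u + b * z₂) ∂gaussianReal (0 + a * 0) (v + .mk (a ^ 2) (sq_nonneg a) * 1) :=
    integral_integral_gaussianReal_add_const_mul a (f := fun u ↦ F (u + b * z₂)) (hF_shift _ _)
  simp_rw [h_inner]
  simpa using integral_integral_gaussianReal_add_const_mul (m₁ := 0 + a * 0) (m₂ := 0)
    (v₁ := v + .mk (a ^ 2) (sq_nonneg a) * 1) (v₂ := 1) b (f := F) (by simpa using hF_shift 0 _)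

end ProbabilityTheory

lemma V_eq_integral_gaussianReal {g : ℝ → ℝ} (hg : Measurable g) (x r σ α : ℝ) {t : ℝ}
    (ht : 0 ≤ t) :
    V g x r σ t α = ∫ w, Real.exp (-(r * t)) * g (x * Real.exp ((r - α - σ ^ 2 / 2) * t + w))
      ∂gaussianReal 0 (σ ^ 2 * t).toNNReal := by
  rw [V, _root_.stdGaussian, integral_gaussianReal_comp_const_mul (σ * Real.sqrt t)
    (f := fun w ↦ Real.exp (-(r * t)) * g (x * Real.exp ((r - α - σ ^ 2 / 2) * t + w)))
    ((hg.comp (by fun_prop)).const_mul _).aestronglyMeasurable]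
  congr 2
  · simp
  · ext
    simp [mul_pow, Real.sq_sqrt ht, mul_nonneg (sq_nonneg σ) ht]

lemma V_div_eq_integral_gaussianReal {g : ℝ → ℝ} (hg : Measurable g) (x R A : ℝ) {S t : ℝ}
    (hS : 0 ≤ S) (ht : 0 < t) :
    V g x (R / t) (Real.sqrt (S / t)) t (A / t)
      = ∫ w, Real.exp (-R) * g (x * Real.exp (R - A - S / 2 + w)) ∂gaussianReal 0 S.toNNReal := by
  have h_drift : (R / t - A / t - S / t / 2) * t = R - A - S / 2 := by field_simp
  rw [V_eq_integral_gaussianReal hg _ _ _ _ ht.le, Real.sq_sqrt (div_nonneg hS ht.le),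
    div_mul_cancel₀ _ ht.ne', h_drift, div_mul_cancel₀ _ ht.ne']

theorem two_switching_identity_general (g : ℝ → ℝ) (hg : Measurable g) (hbdd : ∃ C, ∀ y, |g y| ≤ C)
    (x t s₁ s₂ T ri rj rk αi αj αk σi σj σk : ℝ)
    (hts₁ : t < s₁) (hs₁s₂ : s₁ < s₂) (hs₂T : s₂ < T) :
    (∫ z₂, ∫ z₁, Real.exp (-(ri * (s₁ - t)) - rj * (s₂ - s₁)) *
        V g (x * Real.exp ((ri - αi - σi ^ 2 / 2) * (s₁ - t) + σi * Real.sqrt (s₁ - t) * z₁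
              + (rj - αj - σj ^ 2 / 2) * (s₂ - s₁) + σj * Real.sqrt (s₂ - s₁) * z₂))
          rk σk (T - s₂) αk ∂stdGaussian ∂stdGaussian)
    = V g x ((ri * (s₁ - t) + rj * (s₂ - s₁) + rk * (T - s₂)) / (T - t))
        (Real.sqrt ((σi ^ 2 * (s₁ - t) + σj ^ 2 * (s₂ - s₁) + σk ^ 2 * (T - s₂)) / (T - t)))
        (T - t)
        ((αi * (s₁ - t) + αj * (s₂ - s₁) + αk * (T - s₂)) / (T - t)) := by
  obtain ⟨C, hC⟩ := hbdd
  have hi : 0 ≤ s₁ - t := by linarith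
  have hj : 0 ≤ s₂ - s₁ := by linarith
  have hk : 0 ≤ T - s₂ := by linarith
  set R := ri * (s₁ - t) + rj * (s₂ - s₁) + rk * (T - s₂)
  set A := αi * (s₁ - t) + αj * (s₂ - s₁) + αk * (T - s₂)
  set S := σi ^ 2 * (s₁ - t) + σj ^ 2 * (s₂ - s₁) + σk ^ 2 * (T - s₂)
  set F : ℝ → ℝ := fun u ↦ Real.exp (-R) * g (x * Real.exp (R - A - S / 2 + u))
  have hF_bdd : ∃ C', ∀ u, ‖F u‖ ≤ C' := ⟨_, fun u ↦ by
    rw [norm_mul, Real.norm_eq_abs, Real.abs_exp, Real.norm_eq_abs]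
    exact mul_le_mul_of_nonneg_left (hC _) (Real.exp_pos _).le⟩
  calc _ = ∫ z₂, ∫ z₁, ∫ w, F (w + σi * Real.sqrt (s₁ - t) * z₁ + σj * Real.sqrt (s₂ - s₁) * z₂)
        ∂gaussianReal 0 (σk ^ 2 * (T - s₂)).toNNReal ∂gaussianReal 0 1 ∂gaussianReal 0 1 := by
        simp_rw [V_eq_integral_gaussianReal hg _ _ _ _ hk, ← integral_const_mul]
        congr! 4 with z₂ z₁
        refine integral_congr_ae (.of_forall fun w ↦ ?_)
        simp only [F, R, A, S]
        rw [← mul_assoc, ← Real.exp_add, mul_assoc x, ← Real.exp_add]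
        ring_nf
    _ = _ := integral_integral_integral_gaussianReal
        ((hg.comp (by fun_prop)).const_mul _).stronglyMeasurable hF_bdd _ _ _
    _ = _ := by
        rw [V_div_eq_integral_gaussianReal hg _ _ _ (by positivity) (by linarith)]
        congr 2
        ext
        simp only [NNReal.coe_add, NNReal.coe_mk, mul_pow, Real.sq_sqrt hi, Real.sq_sqrt hj,
          Real.coe_toNNReal _ (mul_nonneg (sq_nonneg σk) hk),
          Real.coe_toNNReal _ (by positivity : 0 ≤ S)]
        ring

/-- Two-switching identity: running with regime-`i` parameters on `[t,s₁]`, regime-`j`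
parameters on `[s₁,s₂]`, and evaluating the regime-`k` value at time `s₂`, produces `V`
with parameters averaged over the three time segments. -/
theorem two_switching_identity (g : ℝ → ℝ) (hg : Measurable g) (hbdd : ∃ C, ∀ y, |g y| ≤ C)
    (x t s₁ s₂ T ri rj rk αi αj αk σi σj σk : ℝ)
    (hts₁ : t < s₁) (hs₁s₂ : s₁ < s₂) (hs₂T : s₂ < T)
    (hσi : 0 < σi) (hσj : 0 < σj) (hσk : 0 < σk) :
    (∫ z₂, ∫ z₁, Real.exp (-(ri * (s₁ - t)) - rj * (s₂ - s₁)) *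
        V g (x * Real.exp ((ri - αi - σi ^ 2 / 2) * (s₁ - t) + σi * Real.sqrt (s₁ - t) * z₁
              + (rj - αj - σj ^ 2 / 2) * (s₂ - s₁) + σj * Real.sqrt (s₂ - s₁) * z₂))
          rk σk (T - s₂) αk ∂stdGaussian ∂stdGaussian)
    = V g x ((ri * (s₁ - t) + rj * (s₂ - s₁) + rk * (T - s₂)) / (T - t))
        (Real.sqrt ((σi ^ 2 * (s₁ - t) + σj ^ 2 * (s₂ - s₁) + σk ^ 2 * (T - s₂)) / (T - t)))
        (T - t)
        ((αi * (s₁ - t) + αj * (s₂ - s₁) + αk * (T - s₂)) / (T - t)) :=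
  two_switching_identity_general g hg hbdd x t s₁ s₂ T ri rj rk αi αj αk σi σj σk hts₁ hs₁s₂ hs₂T
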